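/- arXiv:1802.00988 — 2 statements merged into one kernel-verified Lean document; each statement's English description precedes it below -/
import Mathlib

section
/- The ℂ-subalgebra of ℂ[t, t⁻¹] generated by t² + t⁻² + 2(t + t⁻¹) and 2 + 2t³ + 2t⁻³ is strictly contained in the subalgebra generated by t + t⁻¹. -/
/-!
Write `s = t + t⁻¹`. Both generators are of the form `(s + 1)² q + c` with `c` a constant:
`t² + t⁻² + 2(t + t⁻¹) = (s + 1)² - 3` and `2 + 2t³ + 2t⁻³ = 2(s + 1)²(s - 2) + 6`.
At a primitive cube root of unity `ω` we have `s(ω) + 1 = 0`, so both generators have vanishing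
derivative at `ω`. By the Leibniz rule such Laurent polynomials form a subalgebra, and it does not
contain `s`, whose derivative at `ω` is `1 - ω⁻²`, which is nonzero.
-/

open LaurentPolynomial DualNumber TrivSqZeroExt Polynomial

noncomputable section

namespace LaurentPolynomial

variable {R A : Type*} [CommRing R] [CommRing A] [Algebra R A]

def liftUnit (u : Aˣ) : R[T;T⁻¹] →ₐ[R] A :=
  AddMonoidAlgebra.lift R A ℤ ((Units.coeHom A).comp (zpowersHom Aˣ u))

@[simp]
theorem liftUnit_T (u : Aˣ) (n : ℤ) : liftUnit (R := R) u (T n) = ↑(u ^ n) := by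
  rw [liftUnit, T, AddMonoidAlgebra.lift_single, one_smul]
  rfl

theorem liftUnit_T_one_add_T_neg_one (u : Aˣ) :
    liftUnit (R := R) u (T 1 + T (-1)) = u + ↑u⁻¹ := by
  simp only [map_add, liftUnit_T, zpow_one, zpow_neg]

theorem T_one_mul_T_neg_one : (T 1 * T (-1) : R[T;T⁻¹]) = 1 := by
  rw [← T_add, add_neg_cancel, T_zero]

theorem T_two_add_T_neg_two : (T 2 + T (-2) : R[T;T⁻¹]) = (T 1 + T (-1)) ^ 2 - 2 := by
  have h2 : (T 2 : R[T;T⁻¹]) = T 1 ^ 2 := by rw [T_pow]; norm_num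
  have hm2 : (T (-2) : R[T;T⁻¹]) = T (-1) ^ 2 := by rw [T_pow]; norm_num
  rw [h2, hm2]
  linear_combination (-2 : R[T;T⁻¹]) * T_one_mul_T_neg_one (R := R)

theorem T_three_add_T_neg_three :
    (T 3 + T (-3) : R[T;T⁻¹]) = (T 1 + T (-1)) ^ 3 - 3 * (T 1 + T (-1)) := by
  have h3 : (T 3 : R[T;T⁻¹]) = T 1 ^ 3 := by rw [T_pow]; norm_num
  have hm3 : (T (-3) : R[T;T⁻¹]) = T (-1) ^ 3 := by rw [T_pow]; norm_num
  rw [h3, hm3]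
  linear_combination (-3 * (T 1 + T (-1)) : R[T;T⁻¹]) * T_one_mul_T_neg_one (R := R)

end LaurentPolynomial

section CubeRoot

variable {R : Type*} [CommRing R] {ω : R}

theorem inl_add_eps_mul_inl_sq_sub (hω : ω ^ 2 + ω + 1 = 0) :
    (inl ω + ε) * (inl (ω ^ 2) - inl ω * ε) = (1 : R[ε]) := by
  have h : (inl ω ^ 2 + inl ω + 1 : R[ε]) = 0 := by
    rw [inl_pow, ← inl_add, ← inl_one, ← inl_add, hω, inl_zero]
  rw [← inl_pow]
  linear_combination (inl ω - 1) * h - inl ω * eps_mul_eps (R := R)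

def DualNumber.cubeRootAddEps (hω : ω ^ 2 + ω + 1 = 0) : R[ε]ˣ where
  val := inl ω + ε
  inv := inl (ω ^ 2) - inl ω * ε
  val_inv := inl_add_eps_mul_inl_sq_sub hω
  inv_val := by rw [mul_comm]; exact inl_add_eps_mul_inl_sq_sub hω

theorem liftUnit_cubeRootAddEps_T_one_add_T_neg_one_add_one (hω : ω ^ 2 + ω + 1 = 0) :
    liftUnit (R := R) (cubeRootAddEps hω) (T 1 + T (-1) + 1) = inr (1 - ω) := by
  rw [map_add, liftUnit_T_one_add_T_neg_one, map_one]
  ext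
  · simp only [cubeRootAddEps, Units.inv_mk, fst_add, fst_sub, fst_mul, fst_inl, fst_eps, fst_one,
      fst_inr]
    linear_combination hω
  · simp [cubeRootAddEps, sub_eq_add_neg]

/-- The Laurent polynomials `p` with `p'(ω) = 0`: the map `t ↦ ω + ε` sends `p` to
`p(ω) + p'(ω) ε`. -/
def vanishingDerivSubalgebra (hω : ω ^ 2 + ω + 1 = 0) : Subalgebra R R[T;T⁻¹] :=
  (⊥ : Subalgebra R R[ε]).comap (liftUnit (cubeRootAddEps hω))

theorem aeval_T_one_add_T_neg_one_mem_vanishingDerivSubalgebra (hω : ω ^ 2 + ω + 1 = 0)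
    (q : R[X]) (c : R) :
    aeval (T 1 + T (-1) : R[T;T⁻¹]) ((X + 1) ^ 2 * q + Polynomial.C c) ∈
      vanishingDerivSubalgebra hω := by
  have hsq : (inr (1 - ω) : R[ε]) ^ 2 = 0 := by rw [sq, inr_mul_inr]
  rw [vanishingDerivSubalgebra, Subalgebra.mem_comap, Algebra.mem_bot]
  refine ⟨c, ?_⟩
  have haeval : aeval (T 1 + T (-1) : R[T;T⁻¹]) ((X + 1) ^ 2 * q + Polynomial.C c) =
      (T 1 + T (-1) + 1) ^ 2 * aeval (T 1 + T (-1)) q + algebraMap R _ c := by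
    simp only [map_add, map_mul, map_pow, aeval_X, map_one, aeval_C]
  rw [haeval, map_add, map_mul, map_pow, liftUnit_cubeRootAddEps_T_one_add_T_neg_one_add_one, hsq,
    zero_mul, zero_add, AlgHom.commutes]

theorem T_one_add_T_neg_one_notMem_vanishingDerivSubalgebra (hω : ω ^ 2 + ω + 1 = 0)
    (hω1 : (1 : R) - ω ≠ 0) :
    (T 1 + T (-1) : R[T;T⁻¹]) ∉ vanishingDerivSubalgebra hω := by
  rw [vanishingDerivSubalgebra, Subalgebra.mem_comap, Algebra.mem_bot]
  rintro ⟨r, hr⟩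
  have key := liftUnit_cubeRootAddEps_T_one_add_T_neg_one_add_one hω
  rw [map_add, ← hr, map_one] at key
  exact hω1 (by simpa [algebraMap_eq_inl] using (congrArg snd key).symm)

end CubeRoot

theorem Complex.exists_sq_add_self_add_one_eq_zero :
    ∃ ω : ℂ, ω ^ 2 + ω + 1 = 0 ∧ 1 - ω ≠ 0 := by
  have hζ := Complex.isPrimitiveRoot_exp 3 (by norm_num)
  refine ⟨_, ?_, sub_ne_zero.2 (hζ.ne_one (by norm_num)).symm⟩
  have hsum := hζ.geom_sum_eq_zero (by norm_num)
  simp only [Finset.sum_range_succ, Finset.sum_range_zero, pow_zero, pow_one, zero_add] at hsum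
  linear_combination hsum

theorem stmt_4 :
    Algebra.adjoin ℂ ({T 2 + T (-2) + 2 * (T 1 + T (-1)), 2 + 2 * T 3 + 2 * T (-3)} :
        Set (LaurentPolynomial ℂ)) <
      Algebra.adjoin ℂ ({T 1 + T (-1)} : Set (LaurentPolynomial ℂ)) := by
  obtain ⟨ω, hω, hω1⟩ := Complex.exists_sq_add_self_add_one_eq_zero
  set s : ℂ[T;T⁻¹] := T 1 + T (-1)
  set f : ℂ[T;T⁻¹] := T 2 + T (-2) + 2 * s
  set g : ℂ[T;T⁻¹] := 2 + 2 * T 3 + 2 * T (-3)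
  have hf : f = aeval s ((X + 1) ^ 2 * 1 + Polynomial.C (-3) : ℂ[X]) := by
    simp only [f, s, T_two_add_T_neg_two, map_add, map_mul, map_pow, aeval_X, map_one,
      map_neg, map_ofNat]
    ring
  have hg : g = aeval s ((X + 1) ^ 2 * (2 * (X - 2)) + Polynomial.C 6 : ℂ[X]) := by
    simp only [g, s, add_assoc, ← mul_add, T_three_add_T_neg_three, map_add, map_mul, map_pow,
      map_sub, aeval_X, map_one, map_ofNat]
    ring
  have hle : Algebra.adjoin ℂ {f, g} ≤ Algebra.adjoin ℂ {s} := by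
    rw [Algebra.adjoin_le_iff, Set.insert_subset_iff, Set.singleton_subset_iff, hf, hg]
    exact ⟨aeval_mem_adjoin_singleton ℂ s, aeval_mem_adjoin_singleton ℂ s⟩
  have hS : Algebra.adjoin ℂ {f, g} ≤ vanishingDerivSubalgebra hω := by
    rw [Algebra.adjoin_le_iff, Set.insert_subset_iff, Set.singleton_subset_iff, hf, hg]
    exact ⟨aeval_T_one_add_T_neg_one_mem_vanishingDerivSubalgebra hω _ _,
      aeval_T_one_add_T_neg_one_mem_vanishingDerivSubalgebra hω _ _⟩
  refine lt_of_le_of_ne hle fun h => ?_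
  exact T_one_add_T_neg_one_notMem_vanishingDerivSubalgebra hω hω1
    (hS (h ▸ Algebra.self_mem_adjoin_singleton ℂ s))

end
end

section
/- Let W be the Weyl group of type G₂ acting on the coroot lattice. The stabilizer in W of the line spanned by the coroot (2α+β)∨ is the subgroup generated by the reflections s_β and s_{2α+β}, isomorphic to ℤ/2 × ℤ/2. -/
open Matrix

/-- `s_α` on the coroot lattice of `G₂`, in the basis `(α∨, β∨)`:
`α∨ ↦ -α∨`, `β∨ ↦ β∨ + α∨`. -/
def sA : (Matrix (Fin 2) (Fin 2) ℚ)ˣ where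
  val := !![-1, 1; 0, 1]
  inv := !![-1, 1; 0, 1]
  val_inv := by
    ext i j; fin_cases i <;> fin_cases j <;>
      simp [Matrix.mul_apply, Fin.sum_univ_two]
  inv_val := by
    ext i j; fin_cases i <;> fin_cases j <;>
      simp [Matrix.mul_apply, Fin.sum_univ_two]

/-- `s_β` on the coroot lattice of `G₂`: `α∨ ↦ α∨ + 3β∨`, `β∨ ↦ -β∨`. -/
def sB : (Matrix (Fin 2) (Fin 2) ℚ)ˣ where
  val := !![1, 0; 3, -1]
  inv := !![1, 0; 3, -1]
  val_inv := by
    ext i j; fin_cases i <;> fin_cases j <;>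
      simp [Matrix.mul_apply, Fin.sum_univ_two]
  inv_val := by
    ext i j; fin_cases i <;> fin_cases j <;>
      simp [Matrix.mul_apply, Fin.sum_univ_two]

/-- `s_{2α+β}` on the coroot lattice of `G₂`: `α∨ ↦ -α∨ - 3β∨`, `β∨ ↦ β∨`. -/
def sS14 : (Matrix (Fin 2) (Fin 2) ℚ)ˣ where
  val := !![-1, 0; -3, 1]
  inv := !![-1, 0; -3, 1]
  val_inv := by
    ext i j; fin_cases i <;> fin_cases j <;>
      simp [Matrix.mul_apply, Fin.sum_univ_two]
  inv_val := by
    ext i j; fin_cases i <;> fin_cases j <;>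
      simp [Matrix.mul_apply, Fin.sum_univ_two]

def Qm : Matrix (Fin 2) (Fin 2) ℚ := !![6, -3; -3, 2]

lemma og_mul (M N : Matrix (Fin 2) (Fin 2) ℚ) (hM : Mᵀ * Qm * M = Qm)
    (hN : Nᵀ * Qm * N = Qm) : (M * N)ᵀ * Qm * (M * N) = Qm := by
  calc (M * N)ᵀ * Qm * (M * N) = Nᵀ * (Mᵀ * Qm * M) * N := by
        simp only [Matrix.transpose_mul, Matrix.mul_assoc]
    _ = Qm := by rw [hM]; exact hN

lemma og_inv (M N : Matrix (Fin 2) (Fin 2) ℚ) (h1 : M * N = 1) (hM : Mᵀ * Qm * M = Qm) :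
    Nᵀ * Qm * N = Qm := by
  calc Nᵀ * Qm * N = Nᵀ * (Mᵀ * Qm * M) * N := by rw [hM]
    _ = (M * N)ᵀ * Qm * (M * N) := by simp only [Matrix.transpose_mul, Matrix.mul_assoc]
    _ = Qm := by rw [h1]; simp

/-- subgroup preserving the Gram matrix -/
def Ogrp : Subgroup (Matrix (Fin 2) (Fin 2) ℚ)ˣ where
  carrier := {u | (u : Matrix (Fin 2) (Fin 2) ℚ)ᵀ * Qm * u = Qm}
  one_mem' := by simp
  mul_mem' := by
    intro x y hx hy
    simp only [Set.mem_setOf_eq, Units.val_mul] at *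
    exact og_mul _ _ hx hy
  inv_mem' := by
    intro x hx
    simp only [Set.mem_setOf_eq] at *
    exact og_inv x.val x⁻¹.val (by rw [← Units.val_mul, mul_inv_cancel x]; rfl) hx

def vv : Fin 2 → ℚ := ![2, 3]

/-- stabilizer of the line spanned by vv -/
def Kgrp : Subgroup (Matrix (Fin 2) (Fin 2) ℚ)ˣ where
  carrier := {u | ∃ c : ℚ, (u : Matrix (Fin 2) (Fin 2) ℚ).mulVec vv = c • vv}
  one_mem' := ⟨1, by simp⟩
  mul_mem' := by
    rintro x y ⟨cx, hx⟩ ⟨cy, hy⟩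
    refine ⟨cy * cx, ?_⟩
    show ((x * y : (Matrix (Fin 2) (Fin 2) ℚ)ˣ) : Matrix (Fin 2) (Fin 2) ℚ).mulVec vv = _
    rw [Units.val_mul, ← Matrix.mulVec_mulVec, hy, Matrix.mulVec_smul, hx, smul_smul]
  inv_mem' := by
    rintro x ⟨c, hc⟩
    have h1 : c • ((x⁻¹ : (Matrix (Fin 2) (Fin 2) ℚ)ˣ) : Matrix (Fin 2) (Fin 2) ℚ).mulVec vv = vv := by
      rw [← Matrix.mulVec_smul, ← hc, Matrix.mulVec_mulVec, ← Units.val_mul, inv_mul_cancel x]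
      simp
    have hc0 : c ≠ 0 := by
      rintro rfl
      rw [zero_smul] at h1
      have := congrFun h1 0
      simp [vv] at this
    exact ⟨c⁻¹, by rw [eq_inv_smul_iff₀ hc0]; exact h1⟩

lemma transA : (!![-1, 1; 0, 1] : Matrix (Fin 2) (Fin 2) ℚ)ᵀ = !![-1, 0; 1, 1] := by
  ext i j; fin_cases i <;> fin_cases j <;> rfl

lemma transB : (!![1, 0; 3, -1] : Matrix (Fin 2) (Fin 2) ℚ)ᵀ = !![1, 3; 0, -1] := by
  ext i j; fin_cases i <;> fin_cases j <;> rfl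

lemma sA_mem_O : sA ∈ Ogrp := by
  show (sA : Matrix (Fin 2) (Fin 2) ℚ)ᵀ * Qm * sA = Qm
  show (!![-1, 1; 0, 1] : Matrix (Fin 2) (Fin 2) ℚ)ᵀ * Qm * !![-1, 1; 0, 1] = Qm
  rw [transA]
  ext i j; fin_cases i <;> fin_cases j <;>
    norm_num [Qm, Matrix.mul_apply, Fin.sum_univ_two]

lemma sB_mem_O : sB ∈ Ogrp := by
  show (sB : Matrix (Fin 2) (Fin 2) ℚ)ᵀ * Qm * sB = Qm
  show (!![1, 0; 3, -1] : Matrix (Fin 2) (Fin 2) ℚ)ᵀ * Qm * !![1, 0; 3, -1] = Qm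
  rw [transB]
  ext i j; fin_cases i <;> fin_cases j <;>
    norm_num [Qm, Matrix.mul_apply, Fin.sum_univ_two]

lemma sB_mem_K : sB ∈ Kgrp := by
  refine ⟨1, ?_⟩
  ext i; fin_cases i <;>
    norm_num [sB, vv, Matrix.mulVec, dotProduct, Fin.sum_univ_two]

lemma sS14_mem_K : sS14 ∈ Kgrp := by
  refine ⟨-1, ?_⟩
  ext i; fin_cases i <;>
    norm_num [sS14, vv, Matrix.mulVec, dotProduct, Fin.sum_univ_two]
def negI : (Matrix (Fin 2) (Fin 2) ℚ)ˣ := sB * sS14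

lemma negI_val : (negI : Matrix (Fin 2) (Fin 2) ℚ) = !![-1,0;0,-1] := by
  show (sB : Matrix (Fin 2) (Fin 2) ℚ) * sS14 = _
  ext i j; fin_cases i <;> fin_cases j <;> simp [sB, sS14, Matrix.mul_apply, Fin.sum_univ_two]

lemma sB_sq : sB * sB = 1 := by
  ext : 1
  show (sB : Matrix (Fin 2) (Fin 2) ℚ) * sB = 1
  ext i j; fin_cases i <;> fin_cases j <;> simp [sB, Matrix.mul_apply, Fin.sum_univ_two]

lemma negI_sq : negI * negI = 1 := by
  ext : 1
  show (negI : Matrix (Fin 2) (Fin 2) ℚ) * negI = 1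
  rw [negI_val]
  ext i j; fin_cases i <;> fin_cases j <;> simp [Matrix.mul_apply, Fin.sum_univ_two]

lemma hcom : Commute sB negI := by
  show sB * negI = negI * sB
  ext : 1
  show (sB : Matrix (Fin 2) (Fin 2) ℚ) * negI = (negI : Matrix (Fin 2) (Fin 2) ℚ) * sB
  rw [negI_val]
  ext i j; fin_cases i <;> fin_cases j <;> simp [sB, Matrix.mul_apply, Fin.sum_univ_two]

lemma pow_add_val (u : (Matrix (Fin 2) (Fin 2) ℚ)ˣ) (hu : u * u = 1) (a b : ZMod 2) :
    u ^ (a + b).val = u ^ a.val * u ^ b.val := by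
  rcases (show ∀ x : ZMod 2, x = 0 ∨ x = 1 by decide) a with rfl | rfl <;>
    rcases (show ∀ x : ZMod 2, x = 0 ∨ x = 1 by decide) b with rfl | rfl <;> simp [pow_succ, hu, show ((1:ZMod 2)+1) = 0 from rfl, show ZMod.val (1 : ZMod 2) = 1 from rfl]

def f : Multiplicative (ZMod 2 × ZMod 2) →* (Matrix (Fin 2) (Fin 2) ℚ)ˣ where
  toFun x := sB ^ (x.toAdd.1.val) * negI ^ (x.toAdd.2.val)
  map_one' := by simp
  map_mul' x y := by
    show sB ^ ((x.toAdd.1 + y.toAdd.1).val) * negI ^ ((x.toAdd.2 + y.toAdd.2).val) = _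
    rw [pow_add_val sB sB_sq, pow_add_val negI negI_sq]
    rw [(hcom.symm.pow_pow _ _).mul_mul_mul_comm]

lemma sB_val : (sB : Matrix (Fin 2) (Fin 2) ℚ) = !![1,0;3,-1] := rfl
lemma sS14_val : (sS14 : Matrix (Fin 2) (Fin 2) ℚ) = !![-1,0;-3,1] := rfl

lemma f_inj : Function.Injective f := by
  rw [injective_iff_map_eq_one]
  intro x hx
  have key : ∀ a b : ZMod 2, (sB ^ a.val * negI ^ b.val : (Matrix (Fin 2) (Fin 2) ℚ)ˣ) = 1 →
      a = 0 ∧ b = 0 := by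
    intro a b h
    rcases (show ∀ x : ZMod 2, x = 0 ∨ x = 1 by decide) a with rfl | rfl <;>
      rcases (show ∀ x : ZMod 2, x = 0 ∨ x = 1 by decide) b with rfl | rfl
    · exact ⟨rfl, rfl⟩
    · exfalso
      have h2 : (negI : Matrix (Fin 2) (Fin 2) ℚ) = 1 := by
        simpa [show ZMod.val (1 : ZMod 2) = 1 from rfl] using congrArg Units.val h
      rw [negI_val] at h2
      have := congrFun (congrFun h2 0) 0
      norm_num [Matrix.one_apply] at this
    · exfalso
      have h2 : (sB : Matrix (Fin 2) (Fin 2) ℚ) = 1 := by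
        simpa [show ZMod.val (1 : ZMod 2) = 1 from rfl] using congrArg Units.val h
      rw [sB_val] at h2
      have := congrFun (congrFun h2 1) 0
      norm_num [Matrix.one_apply] at this
    · exfalso
      have hval : sB ^ ZMod.val (1 : ZMod 2) * negI ^ ZMod.val (1 : ZMod 2) = sS14 := by
        rw [show ZMod.val (1 : ZMod 2) = 1 from rfl]
        simp only [pow_one, negI, ← mul_assoc, sB_sq, one_mul]
      have h' : sB ^ ZMod.val (1 : ZMod 2) * negI ^ ZMod.val (1 : ZMod 2) = 1 := h
      rw [hval] at h'
      have h2 := congrArg Units.val h'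
      rw [sS14_val] at h2
      have := congrFun (congrFun h2 0) 0
      norm_num [Matrix.one_apply] at this
  obtain ⟨h1, h2⟩ := key x.toAdd.1 x.toAdd.2 hx
  have : x.toAdd = 0 := Prod.ext h1 h2
  calc x = Multiplicative.ofAdd x.toAdd := rfl
    _ = Multiplicative.ofAdd 0 := by rw [this]
    _ = 1 := rfl

lemma f_range : f.range = Subgroup.closure {sB, sS14} := by
  apply le_antisymm
  · rintro _ ⟨x, rfl⟩
    have hB : sB ∈ Subgroup.closure {sB, sS14} := Subgroup.subset_closure (by simp)
    have hS : sS14 ∈ Subgroup.closure {sB, sS14} := Subgroup.subset_closure (by simp)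
    exact mul_mem (pow_mem hB _) (pow_mem (mul_mem hB hS) _)
  · rw [Subgroup.closure_le]
    rintro x (rfl | rfl)
    · exact ⟨Multiplicative.ofAdd (1, 0), by
        show sB ^ ZMod.val (1 : ZMod 2) * negI ^ ZMod.val (0 : ZMod 2) = sB
        simp [show ZMod.val (1 : ZMod 2) = 1 from rfl]⟩
    · exact ⟨Multiplicative.ofAdd (1, 1), by
        show sB ^ ZMod.val (1 : ZMod 2) * negI ^ ZMod.val (1 : ZMod 2) = sS14
        rw [show ZMod.val (1 : ZMod 2) = 1 from rfl]
        simp only [pow_one, negI, ← mul_assoc, sB_sq, one_mul]⟩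

lemma equiv_part : Nonempty ((Subgroup.closure {sB, sS14} : Subgroup (Matrix (Fin 2) (Fin 2) ℚ)ˣ) ≃*
    Multiplicative (ZMod 2 × ZMod 2)) :=
  ⟨((MonoidHom.ofInjective f_inj).trans (MulEquiv.subgroupCongr f_range)).symm⟩
lemma quad_classify (a b cc d s : ℚ)
    (hE1 : 2*a + 3*b = 2*s) (hE2 : 2*cc + 3*d = 3*s)
    (hG1 : 6*a^2 - 6*a*cc + 2*cc^2 = 6)
    (hG2 : 6*a*b - 3*a*d - 3*b*cc + 2*cc*d = -3)
    (hG3 : 6*b^2 - 6*b*d + 2*d^2 = 2) :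
    (a=1 ∧ b=0 ∧ cc=0 ∧ d=1) ∨ (a=1 ∧ b=0 ∧ cc=3 ∧ d=-1) ∨
    (a=-1 ∧ b=0 ∧ cc=-3 ∧ d=1) ∨ (a=-1 ∧ b=0 ∧ cc=0 ∧ d=-1) := by
  have hs : s^2 = 1 := by
    linear_combination (2/3)*hG1 + 2*hG2 + (3/2)*hG3 + (s-2*a-3*b)*hE1 +
      (2*a+3*b-s-(2*cc+3*d)/3)*hE2
  have hsb : s*b = 0 := by
    linear_combination (2/3)*hG2 + hG3 + (d-2*b)*hE1 + (b-(2/3)*d)*hE2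
  have hb : b = 0 := by
    rcases mul_eq_zero.mp hsb with h | h
    · rw [h] at hs; norm_num at hs
    · exact h
  subst hb
  have ha : a = s := by linarith
  have hd2 : d^2 = 1 := by linear_combination (1/2)*hG3
  have hss : s = 1 ∨ s = -1 := by
    have : (s-1)*(s+1) = 0 := by linear_combination hs
    rcases mul_eq_zero.mp this with h | h
    · left; linarith
    · right; linarith
  have hdd : d = 1 ∨ d = -1 := by
    have : (d-1)*(d+1) = 0 := by linear_combination hd2
    rcases mul_eq_zero.mp this with h | h
    · left; linarith
    · right; linarith
  rcases hss with h1 | h1 <;> rcases hdd with h2 | h2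
  · exact Or.inl ⟨by linarith, rfl, by linarith, h2⟩
  · exact Or.inr (Or.inl ⟨by linarith, rfl, by linarith, h2⟩)
  · exact Or.inr (Or.inr (Or.inl ⟨by linarith, rfl, by linarith, h2⟩))
  · exact Or.inr (Or.inr (Or.inr ⟨by linarith, rfl, by linarith, h2⟩))

/-- The stabilizer in the Weyl group `W(G₂) = ⟨s_α, s_β⟩` of the line spanned by the
coroot `(2α+β)∨ = 2α∨ + 3β∨` is `⟨s_β, s_{2α+β}⟩ ≃ ℤ/2 × ℤ/2`. -/
theorem stmt_14 :
    let W : Subgroup (Matrix (Fin 2) (Fin 2) ℚ)ˣ := Subgroup.closure {sA, sB}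
    let v : Fin 2 → ℚ := ![2, 3]  -- the coroot (2α+β)∨
    (∀ w ∈ W, ((∃ c : ℚ, (w : Matrix (Fin 2) (Fin 2) ℚ).mulVec v = c • v) ↔
        w ∈ Subgroup.closure {sB, sS14})) ∧
      Nonempty ((Subgroup.closure {sB, sS14} : Subgroup (Matrix (Fin 2) (Fin 2) ℚ)ˣ) ≃*
        Multiplicative (ZMod 2 × ZMod 2)) := by
  intro W v
  refine ⟨?_, equiv_part⟩
  intro w hw
  constructor
  · rintro ⟨c, hc⟩
    have hQw : ((w : Matrix (Fin 2) (Fin 2) ℚ))ᵀ * Qm * w = Qm := by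
      have hle : W ≤ Ogrp := (Subgroup.closure_le Ogrp).2 (by
        rintro x (rfl | rfl)
        exacts [sA_mem_O, sB_mem_O])
      exact hle hw
    have e0 := congrFun hc 0
    have e1 := congrFun hc 1
    simp [v, Matrix.mulVec, dotProduct, Fin.sum_univ_two] at e0 e1
    have g00 := congrFun (congrFun hQw 0) 0
    have g01 := congrFun (congrFun hQw 0) 1
    have g11 := congrFun (congrFun hQw 1) 1
    simp [Qm, Matrix.mul_apply, Matrix.transpose_apply, Fin.sum_univ_two] at g00 g01 g11
    obtain h | h | h | h := quad_classify ((w : Matrix (Fin 2) (Fin 2) ℚ) 0 0)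
        ((w : Matrix (Fin 2) (Fin 2) ℚ) 0 1) ((w : Matrix (Fin 2) (Fin 2) ℚ) 1 0)
        ((w : Matrix (Fin 2) (Fin 2) ℚ) 1 1) c
        (by linear_combination e0) (by linear_combination e1)
        (by linear_combination g00) (by linear_combination g01) (by linear_combination g11)
    · have hwid : w = 1 := by
        refine Units.ext ?_
        ext i j
        fin_cases i <;> fin_cases j
        · simpa [Matrix.one_apply] using h.1
        · simpa [Matrix.one_apply] using h.2.1
        · simpa [Matrix.one_apply] using h.2.2.1
        · simpa [Matrix.one_apply] using h.2.2.2
      rw [hwid]; exact Subgroup.one_mem _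
    · have hwid : w = sB := by
        refine Units.ext ?_
        ext i j
        fin_cases i <;> fin_cases j
        · simpa [sB] using h.1
        · simpa [sB] using h.2.1
        · simpa [sB] using h.2.2.1
        · simpa [sB] using h.2.2.2
      rw [hwid]; exact Subgroup.subset_closure (by simp)
    · have hwid : w = sS14 := by
        refine Units.ext ?_
        ext i j
        fin_cases i <;> fin_cases j
        · simpa [sS14] using h.1
        · simpa [sS14] using h.2.1
        · simpa [sS14] using h.2.2.1
        · simpa [sS14] using h.2.2.2
      rw [hwid]; exact Subgroup.subset_closure (by simp)
    · have hwid : w = sB * sS14 := by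
        refine Units.ext ?_
        have hval : ((sB * sS14 : (Matrix (Fin 2) (Fin 2) ℚ)ˣ) : Matrix (Fin 2) (Fin 2) ℚ) =
            !![-1, 0; 0, -1] := negI_val
        rw [hval]
        ext i j
        fin_cases i <;> fin_cases j
        · simpa using h.1
        · simpa using h.2.1
        · simpa using h.2.2.1
        · simpa using h.2.2.2
      rw [hwid]
      exact mul_mem (Subgroup.subset_closure (by simp)) (Subgroup.subset_closure (by simp))
  · intro hmem
    have hle : Subgroup.closure {sB, sS14} ≤ Kgrp := (Subgroup.closure_le Kgrp).2 (by
      rintro x (rfl | rfl)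
      exacts [sB_mem_K, sS14_mem_K])
    exact hle hmem
end
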